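/- arXiv:1409.6284 — 10 statements merged into one kernel-verified Lean document; each statement's English description precedes it below -/
import Mathlib

section
/- Let N ≥ 1 be an integer, 1 < p < ∞, 0 < s < 1, R > 0 and x₀ ∈ ℝ^N. For every measurable function u : ℝ^N → ℝ with u ∈ L^p(B_R(x₀)) one has the Poincaré-type inequality (|{x ∈ B_R(x₀) : u(x) = 0}| / (2^{N+p} · R^N)) · R^{−sp} · ∫_{B_R(x₀)} |u|^p dx ≤ ∫_{B_R(x₀)} ∫_{B_R(x₀)} |u(x) − u(y)|^p / |x − y|^{N+sp} dx dy, where the right-hand side may equal +∞. -/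
open MeasureTheory Metric Real
open scoped ENNReal

/-- Poincaré inequality with localized Gagliardo seminorm on a ball. -/
theorem stmt_0 (N : ℕ) (hN : 1 ≤ N) (p s R : ℝ) (hp : 1 < p) (hs0 : 0 < s) (hs1 : s < 1)
    (hR : 0 < R) (x₀ : EuclideanSpace ℝ (Fin N)) (u : EuclideanSpace ℝ (Fin N) → ℝ)
    (hmeas : Measurable u)
    (hLp : IntegrableOn (fun x => |u x| ^ p) (ball x₀ R) volume) :
    volume {x ∈ ball x₀ R | u x = 0} / ENNReal.ofReal (2 ^ ((N : ℝ) + p) * R ^ (N : ℝ))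
        * ENNReal.ofReal (R ^ (-(s * p)))
        * ∫⁻ x in ball x₀ R, ENNReal.ofReal (|u x| ^ p)
      ≤ ∫⁻ x in ball x₀ R, ∫⁻ y in ball x₀ R,
          ENNReal.ofReal (|u x - u y| ^ p / ‖x - y‖ ^ ((N : ℝ) + s * p)) := by
  have hp0 : (0:ℝ) < p := lt_trans one_pos hp
  set e : ℝ := (N : ℝ) + s * p with he_def
  have he : (0:ℝ) < e := by positivity
  set K : ℝ := (2*R) ^ e with hK_def
  have hK : 0 < K := Real.rpow_pos_of_pos (by linarith) e
  set B := ball x₀ R with hB_def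
  set Z := {x ∈ B | u x = 0} with hZ_def
  have hZm : MeasurableSet Z := measurableSet_ball.inter (hmeas (measurableSet_singleton 0))
  have hZsub : Z ⊆ B := fun x hx => hx.1
  have hZfin : volume Z ≠ ⊤ := ((measure_mono hZsub).trans_lt measure_ball_lt_top).ne
  haveI : Inhabited (Fin N) := ⟨⟨0, hN⟩⟩
  haveI : Nontrivial (EuclideanSpace ℝ (Fin N)) :=
    ⟨⟨EuclideanSpace.single ⟨0, hN⟩ 1, 0, fun h => by simpa using congrArg (fun v => v ⟨0, hN⟩) h⟩⟩
  set I := ∫⁻ x in B, ENNReal.ofReal (|u x| ^ p) with hI_def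
  have step1 : ∀ x ∈ B, ENNReal.ofReal (|u x|^p / K) * volume Z
      ≤ ∫⁻ y in B, ENNReal.ofReal (|u x - u y| ^ p / ‖x - y‖ ^ e) := by
    intro x hx
    have h1 : (∀ᵐ y ∂(volume.restrict Z), y ∈ Z) := ae_restrict_mem hZm
    have h2 : (∀ᵐ y ∂(volume.restrict Z), y ≠ x) := by
      refine ae_restrict_of_ae ?_
      have hvz : volume ({x} : Set (EuclideanSpace ℝ (Fin N))) = 0 := measure_singleton x
      rw [ae_iff]
      simpa using hvz
    calc ENNReal.ofReal (|u x|^p / K) * volume Z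
        = ∫⁻ _ in Z, ENNReal.ofReal (|u x|^p / K) := (setLIntegral_const Z _).symm
      _ ≤ ∫⁻ y in Z, ENNReal.ofReal (|u x - u y| ^ p / ‖x - y‖ ^ e) := by
          refine lintegral_mono_ae ?_
          filter_upwards [h1, h2] with y hyZ hyx
          apply ENNReal.ofReal_le_ofReal
          have hxy0 : 0 < ‖x - y‖ := by
            rw [norm_pos_iff]
            exact sub_ne_zero.mpr (Ne.symm hyx)
          have hxy2 : ‖x - y‖ ≤ 2 * R := by
            have h1' := mem_ball.mp hx
            have h2' := mem_ball.mp (hZsub hyZ)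
            calc ‖x - y‖ = dist x y := (dist_eq_norm x y).symm
              _ ≤ dist x x₀ + dist y x₀ := dist_triangle_right x y x₀
              _ ≤ 2*R := by linarith
          rw [hyZ.2, sub_zero]
          gcongr
          exact Real.rpow_le_rpow hxy0.le hxy2 he.le
      _ ≤ ∫⁻ y in B, ENNReal.ofReal (|u x - u y| ^ p / ‖x - y‖ ^ e) :=
          lintegral_mono' (Measure.restrict_mono hZsub le_rfl) le_rfl
  have hct : ENNReal.ofReal K⁻¹ * volume Z ≠ ⊤ :=
    ENNReal.mul_ne_top ENNReal.ofReal_ne_top hZfin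
  have step2 : I * (ENNReal.ofReal K⁻¹ * volume Z)
      ≤ ∫⁻ x in B, ∫⁻ y in B, ENNReal.ofReal (|u x - u y| ^ p / ‖x - y‖ ^ e) := by
    have hrw : ∀ x : EuclideanSpace ℝ (Fin N),
        ENNReal.ofReal (|u x|^p) * (ENNReal.ofReal K⁻¹ * volume Z)
        = ENNReal.ofReal (|u x|^p / K) * volume Z := by
      intro x
      rw [div_eq_mul_inv, ENNReal.ofReal_mul (by positivity), mul_assoc]
    calc I * (ENNReal.ofReal K⁻¹ * volume Z)
        = ∫⁻ x in B, ENNReal.ofReal (|u x|^p) * (ENNReal.ofReal K⁻¹ * volume Z) :=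
          (lintegral_mul_const' _ _ hct).symm
      _ ≤ _ := by
          refine lintegral_mono_ae ?_
          filter_upwards [ae_restrict_mem measurableSet_ball] with x hx
          rw [hrw x]
          exact step1 x hx
  have hA : (0:ℝ) < 2 ^ ((N:ℝ) + p) * R ^ (N:ℝ) := by positivity
  have key : (ENNReal.ofReal (2 ^ ((N:ℝ) + p) * R ^ (N:ℝ)))⁻¹ * ENNReal.ofReal (R ^ (-(s*p)))
      ≤ ENNReal.ofReal K⁻¹ := by
    rw [← ENNReal.ofReal_inv_of_pos hA, ← ENNReal.ofReal_mul (by positivity)]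
    apply ENNReal.ofReal_le_ofReal
    rw [Real.rpow_neg hR.le, ← mul_inv]
    apply inv_anti₀ hK
    have hKeq : K = 2 ^ e * R ^ e := by
      rw [hK_def, Real.mul_rpow (by norm_num) hR.le]
    rw [hKeq, mul_assoc, ← Real.rpow_add hR]
    have h2e : (2:ℝ) ^ e ≤ 2 ^ ((N:ℝ) + p) := by
      apply Real.rpow_le_rpow_of_exponent_le one_le_two
      rw [he_def]
      nlinarith
    exact mul_le_mul_of_nonneg_right h2e (Real.rpow_nonneg (by positivity) _)
  calc volume Z / ENNReal.ofReal (2 ^ ((N:ℝ) + p) * R ^ (N:ℝ))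
        * ENNReal.ofReal (R ^ (-(s * p))) * I
      = I * ((ENNReal.ofReal (2 ^ ((N:ℝ) + p) * R ^ (N:ℝ)))⁻¹
          * ENNReal.ofReal (R ^ (-(s * p)))) * volume Z := by
        rw [div_eq_mul_inv]; ring
    _ ≤ I * ENNReal.ofReal K⁻¹ * volume Z := by gcongr
    _ = I * (ENNReal.ofReal K⁻¹ * volume Z) := by ring
    _ ≤ _ := step2
end

section
/- Let N ≥ 1 be an integer, 1 < p < ∞, 0 < s < 1, 0 < r < R and x₀ ∈ ℝ^N. For every measurable function u : ℝ^N → ℝ with u ∈ L^p(B_r(x₀)) and u = 0 almost everywhere on B_R(x₀) \ B_r(x₀), one has (N·ω_N / 2^{N+p}) · (r/R)^N · ((R − r)/r) · R^{−sp} · ∫_{B_r(x₀)} |u|^p dx ≤ ∫_{B_R(x₀)} ∫_{B_R(x₀)} |u(x) − u(y)|^p / |x − y|^{N+sp} dx dy, where the right-hand side may equal +∞. -/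
open MeasureTheory Metric Real
open scoped ENNReal

private lemma aux_key (r R : ℝ) (hr : 0 ≤ r) (hrR : r ≤ R) :
    ∀ n : ℕ, (n : ℝ) * r ^ n * (R - r) ≤ r * (R ^ n - r ^ n) := by
  intro n
  induction n with
  | zero => simp
  | succ n ih =>
    have h1 : (0:ℝ) ≤ R ^ n - r ^ n := sub_nonneg.2 (pow_le_pow_left₀ hr hrR n)
    have h3 := mul_le_mul_of_nonneg_right ih hr
    push_cast
    simp only [pow_succ]
    nlinarith [mul_nonneg (mul_nonneg hr (sub_nonneg.2 hrR)) h1]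

private lemma const_ineq (N : ℕ) (hN : 1 ≤ N) (p s r R ω : ℝ) (hp : 1 < p)
    (hs0 : 0 < s) (hs1 : s < 1) (hr : 0 < r) (hrR : r < R) (hω : 0 ≤ ω) :
    (N : ℝ) * ω / 2 ^ ((N : ℝ) + p) * (r / R) ^ (N : ℝ) * ((R - r) / r) * R ^ (-(s * p))
      ≤ (R ^ N - r ^ N) * ω / (2 * R) ^ ((N : ℝ) + s * p) := by
  have hR : 0 < R := hr.trans hrR
  have hsp_pos : 0 < s * p := mul_pos hs0 (by linarith)
  have hsp_le : s * p ≤ p := by nlinarith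
  have h2R : (0:ℝ) < 2 * R := by linarith
  rw [Real.rpow_add two_pos, Real.rpow_add h2R, Real.rpow_natCast, Real.rpow_natCast,
    Real.rpow_natCast, Real.rpow_neg hR.le, mul_pow, div_pow, Real.mul_rpow (by norm_num) hR.le]
  set X := R ^ (s * p) with hX
  set A2 := (2:ℝ) ^ (s * p) with hA2
  set B2 := (2:ℝ) ^ p with hB2
  have hXpos : 0 < X := Real.rpow_pos_of_pos hR _
  have hA2pos : 0 < A2 := Real.rpow_pos_of_pos two_pos _
  have hB2pos : 0 < B2 := Real.rpow_pos_of_pos two_pos _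
  have hAB : A2 ≤ B2 := Real.rpow_le_rpow_of_exponent_le one_le_two hsp_le
  have key := aux_key r R hr.le hrR.le N
  have h1 : (0:ℝ) ≤ R ^ N - r ^ N := sub_nonneg.2 (pow_le_pow_left₀ hr.le hrR.le N)
  have key' : (N:ℝ) * r ^ N * (R - r) * A2 ≤ r * (R ^ N - r ^ N) * B2 :=
    mul_le_mul key hAB hA2pos.le (by positivity)
  have hrN : 0 < r ^ N := pow_pos hr N
  have hRN : 0 < R ^ N := pow_pos hR N
  have h2N : (0:ℝ) < (2:ℝ) ^ N := by positivity
  have e1 : (N : ℝ) * ω / (2 ^ N * B2) * (r ^ N / R ^ N) * ((R - r) / r) * X⁻¹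
      = (N : ℝ) * ω * r ^ N * (R - r) / (2 ^ N * B2 * R ^ N * r * X) := by ring
  rw [e1, div_le_div_iff₀ (by positivity) (by positivity)]
  nlinarith [mul_le_mul_of_nonneg_left key' (by positivity : (0:ℝ) ≤ ω * X * (2:ℝ) ^ N * R ^ N)]


/-- Poincaré inequality with localized seminorm, for functions vanishing a.e. on the
annulus `B_R(x₀) \ B_r(x₀)`. Here `ω_N` is the volume of the unit ball in `ℝ^N`. -/
theorem stmt_1 (N : ℕ) (hN : 1 ≤ N) (p s r R : ℝ) (hp : 1 < p) (hs0 : 0 < s) (hs1 : s < 1)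
    (hr : 0 < r) (hrR : r < R) (x₀ : EuclideanSpace ℝ (Fin N)) (u : EuclideanSpace ℝ (Fin N) → ℝ)
    (hmeas : Measurable u)
    (hLp : IntegrableOn (fun x => |u x| ^ p) (ball x₀ r) volume)
    (hzero : ∀ᵐ x ∂volume, x ∈ ball x₀ R \ ball x₀ r → u x = 0) :
    ENNReal.ofReal ((N : ℝ) * (volume (ball (0 : EuclideanSpace ℝ (Fin N)) 1)).toReal
          / 2 ^ ((N : ℝ) + p) * (r / R) ^ (N : ℝ) * ((R - r) / r) * R ^ (-(s * p)))
        * ∫⁻ x in ball x₀ r, ENNReal.ofReal (|u x| ^ p)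
      ≤ ∫⁻ x in ball x₀ R, ∫⁻ y in ball x₀ R,
          ENNReal.ofReal (|u x - u y| ^ p / ‖x - y‖ ^ ((N : ℝ) + s * p)) := by

  have hR : 0 < R := hr.trans hrR
  have hsp : 0 < s * p := mul_pos hs0 (by linarith)
  have he0 : (0:ℝ) ≤ (N:ℝ) + s * p := by positivity
  set K : ℝ := (2*R) ^ ((N:ℝ) + s * p) with hKdef
  have hKpos : 0 < K := Real.rpow_pos_of_pos (by linarith) _
  set A : Set (EuclideanSpace ℝ (Fin N)) := ball x₀ R \ ball x₀ r with hA
  have hAm : MeasurableSet A := measurableSet_ball.diff measurableSet_ball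
  have hz : ∀ᵐ y ∂(volume.restrict A), u y = 0 := (ae_restrict_iff' hAm).2 hzero
  set ω : ℝ := (volume (ball (0 : EuclideanSpace ℝ (Fin N)) 1)).toReal with hωdef
  have hω : 0 ≤ ω := ENNReal.toReal_nonneg
  haveI : Nonempty (Fin N) := ⟨⟨0, hN⟩⟩
  have hmeasf : Measurable fun x : EuclideanSpace ℝ (Fin N) => ENNReal.ofReal (|u x| ^ p) := by
    fun_prop
  -- volume of annulus
  have hvA : volume A = ENNReal.ofReal ((R ^ N - r ^ N) * ω) := by
    rw [hA, measure_diff (ball_subset_ball hrR.le) measurableSet_ball.nullMeasurableSet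
        measure_ball_lt_top.ne,
      Measure.addHaar_ball volume x₀ hR.le, Measure.addHaar_ball volume x₀ hr.le,
      finrank_euclideanSpace_fin,
      ← ENNReal.sub_mul (fun _ _ => measure_ball_lt_top.ne),
      ← ENNReal.ofReal_sub _ (pow_nonneg hr.le N), hωdef,
      ← ENNReal.ofReal_toReal (measure_ball_lt_top).ne,
      ← ENNReal.ofReal_mul (sub_nonneg.2 (pow_le_pow_left₀ hr.le hrR.le N))]
    simp [ENNReal.ofReal_toReal (measure_ball_lt_top).ne]
  have inner : ∀ x ∈ ball x₀ r,
      ENNReal.ofReal (|u x| ^ p / K) * volume A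
        ≤ ∫⁻ y in A, ENNReal.ofReal (|u x - u y| ^ p / ‖x - y‖ ^ ((N:ℝ) + s * p)) := by
    intro x hx
    rw [← setLIntegral_const]
    refine lintegral_mono_ae ?_
    filter_upwards [hz, ae_restrict_mem hAm] with y hy0 hyA
    rw [hy0, sub_zero]
    apply ENNReal.ofReal_le_ofReal
    have hxy : 0 < ‖x - y‖ := by
      rw [norm_sub_pos_iff]
      rintro rfl
      exact hyA.2 hx
    have h2 : ‖x - y‖ ≤ 2 * R := by
      have h3 := dist_triangle x x₀ y
      have h4 : dist x x₀ < r := mem_ball.1 hx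
      have h5 : dist x₀ y < R := by rw [dist_comm]; exact mem_ball.1 hyA.1
      rw [← dist_eq_norm]
      linarith
    have h6 : ‖x - y‖ ^ ((N:ℝ) + s * p) ≤ K :=
      Real.rpow_le_rpow (norm_nonneg _) h2 he0
    have h7 : 0 < ‖x - y‖ ^ ((N:ℝ) + s * p) := Real.rpow_pos_of_pos hxy _
    gcongr
  have step : ∫⁻ x in ball x₀ r, ENNReal.ofReal (|u x| ^ p / K) * volume A
      = (∫⁻ x in ball x₀ r, ENNReal.ofReal (|u x| ^ p)) * ((ENNReal.ofReal K)⁻¹ * volume A) := by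
    simp_rw [ENNReal.ofReal_div_of_pos hKpos, div_eq_mul_inv, mul_assoc]
    exact lintegral_mul_const _ hmeasf
  have constbound : ENNReal.ofReal ((N : ℝ) * ω / 2 ^ ((N : ℝ) + p) * (r / R) ^ (N : ℝ)
      * ((R - r) / r) * R ^ (-(s * p))) ≤ (ENNReal.ofReal K)⁻¹ * volume A := by
    rw [hvA, ← ENNReal.div_eq_inv_mul, ← ENNReal.ofReal_div_of_pos hKpos]
    exact ENNReal.ofReal_le_ofReal (const_ineq N hN p s r R ω hp hs0 hs1 hr hrR hω)
  calc ENNReal.ofReal ((N : ℝ) * ω / 2 ^ ((N : ℝ) + p) * (r / R) ^ (N : ℝ) * ((R - r) / r)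
          * R ^ (-(s * p))) * ∫⁻ x in ball x₀ r, ENNReal.ofReal (|u x| ^ p)
      ≤ ((ENNReal.ofReal K)⁻¹ * volume A) * ∫⁻ x in ball x₀ r, ENNReal.ofReal (|u x| ^ p) :=
        mul_le_mul_left constbound _
    _ = ∫⁻ x in ball x₀ r, ENNReal.ofReal (|u x| ^ p / K) * volume A := by rw [step, mul_comm]
    _ ≤ ∫⁻ x in ball x₀ r, ∫⁻ y in A,
          ENNReal.ofReal (|u x - u y| ^ p / ‖x - y‖ ^ ((N:ℝ) + s * p)) :=
        setLIntegral_mono' measurableSet_ball inner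
    _ ≤ ∫⁻ x in ball x₀ r, ∫⁻ y in ball x₀ R,
          ENNReal.ofReal (|u x - u y| ^ p / ‖x - y‖ ^ ((N:ℝ) + s * p)) :=
        lintegral_mono fun x => lintegral_mono_set Set.diff_subset
    _ ≤ ∫⁻ x in ball x₀ R, ∫⁻ y in ball x₀ R,
          ENNReal.ofReal (|u x - u y| ^ p / ‖x - y‖ ^ ((N:ℝ) + s * p)) :=
        lintegral_mono_set (ball_subset_ball hrR.le)
end

section
/- Let 1 < p < ∞, let τ ≥ 0, and let f : ℝ → ℝ be a convex function of class C¹. Then for every a, b ∈ ℝ and every A, B ≥ 0 one has J_p(a − b) · [ A · J_{p,τ}(f'(a)) − B · J_{p,τ}(f'(b)) ] ≥ ( τ·(a − b)² + (f(a) − f(b))² )^{(p−2)/2} · (f(a) − f(b)) · (A − B), where J_{p,τ}(t) := (τ + t²)^{(p−2)/2} · t. -/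
open Real

private lemma g_mono_nonneg {p τ s t : ℝ} (hp : 1 < p) (hτ : 0 ≤ τ)
    (hs : 0 ≤ s) (hst : s ≤ t) :
    (τ + s ^ 2) ^ ((p - 2) / 2) * s ≤ (τ + t ^ 2) ^ ((p - 2) / 2) * t := by
  have ht : 0 ≤ t := hs.trans hst
  have hbs : 0 ≤ τ + s ^ 2 := by positivity
  have hbt : 0 ≤ τ + t ^ 2 := by positivity
  rcases le_or_gt 2 p with h2 | h2
  · have hq : 0 ≤ (p - 2) / 2 := by linarith
    exact mul_le_mul (Real.rpow_le_rpow hbs (by nlinarith) hq) hst hs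
      (Real.rpow_nonneg hbt _)
  · rcases eq_or_lt_of_le hs with hs0 | hs0
    · rw [← hs0]
      simpa using mul_nonneg (Real.rpow_nonneg hbt _) ht
    · have ht0 : 0 < t := lt_of_lt_of_le hs0 hst
      have hbs' : 0 < τ + s ^ 2 := by positivity
      have hbt' : 0 < τ + t ^ 2 := by positivity
      set r : ℝ := (2 - p) / 2 with hr
      have hr0 : 0 < r := by rw [hr]; linarith
      have hr1 : 2 * r ≤ 1 := by rw [hr]; linarith
      have hkey : s * (τ + t ^ 2) ^ r ≤ t * (τ + s ^ 2) ^ r := by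
        have hst1 : s / t ≤ 1 := div_le_one_of_le₀ hst ht
        have hst0 : 0 < s / t := div_pos hs0 ht0
        have hbase : (s / t) ^ (2 : ℝ) ≤ (τ + s ^ 2) / (τ + t ^ 2) := by
          rw [Real.rpow_two, div_pow, div_le_div_iff₀ (by positivity) hbt']
          nlinarith [mul_nonneg hτ (sub_nonneg.2 (pow_le_pow_left₀ hs hst 2))]
        have h1 : s / t ≤ ((τ + s ^ 2) / (τ + t ^ 2)) ^ r := by
          calc s / t = (s / t) ^ (1 : ℝ) := (Real.rpow_one _).symm
            _ ≤ (s / t) ^ (2 * r) :=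
              Real.rpow_le_rpow_of_exponent_ge hst0 hst1 hr1
            _ = ((s / t) ^ (2 : ℝ)) ^ r := by
              rw [← Real.rpow_mul hst0.le]
            _ ≤ ((τ + s ^ 2) / (τ + t ^ 2)) ^ r :=
              Real.rpow_le_rpow (Real.rpow_nonneg hst0.le _) hbase hr0.le
        rw [Real.div_rpow hbs hbt'.le] at h1
        rw [div_le_div_iff₀ ht0 (Real.rpow_pos_of_pos hbt' r)] at h1
        linarith
      have e1 : (p - 2) / 2 = -r := by rw [hr]; ring
      rw [e1, Real.rpow_neg hbs, Real.rpow_neg hbt, inv_mul_eq_div, inv_mul_eq_div,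
        div_le_div_iff₀ (Real.rpow_pos_of_pos hbs' r) (Real.rpow_pos_of_pos hbt' r)]
      exact hkey

private lemma g_mono {p τ : ℝ} (hp : 1 < p) (hτ : 0 ≤ τ) :
    Monotone (fun t : ℝ => (τ + t ^ 2) ^ ((p - 2) / 2) * t) := by
  intro s t hst
  simp only
  rcases le_or_gt 0 s with hs | hs
  · exact g_mono_nonneg hp hτ hs hst
  rcases le_or_gt 0 t with ht | ht
  · have h1 : (τ + s ^ 2) ^ ((p - 2) / 2) * s ≤ 0 :=
      mul_nonpos_of_nonneg_of_nonpos (Real.rpow_nonneg (by positivity) _) hs.le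
    exact h1.trans (mul_nonneg (Real.rpow_nonneg (by positivity) _) ht)
  · have h := g_mono_nonneg (s := -t) (t := -s) hp hτ (by linarith) (by linarith)
    simp only [neg_sq, mul_neg] at h
    linarith

/-- Pointwise inequality towards subsolutions: for `f` convex of class `C¹`, `τ ≥ 0`,
`A, B ≥ 0`, one has
`J_p(a-b) (A J_{p,τ}(f'(a)) - B J_{p,τ}(f'(b)))
  ≥ (τ(a-b)² + (f(a)-f(b))²)^{(p-2)/2} (f(a)-f(b)) (A-B)`,
where `J_p(t) = |t|^{p-2} t` and `J_{p,τ}(t) = (τ + t²)^{(p-2)/2} t`. -/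
theorem stmt_5 (p τ : ℝ) (hp : 1 < p) (hτ : 0 ≤ τ) (f f' : ℝ → ℝ)
    (hconv : ConvexOn ℝ Set.univ f) (hderiv : ∀ x, HasDerivAt f (f' x) x)
    (hcont : Continuous f') (a b A B : ℝ) (hA : 0 ≤ A) (hB : 0 ≤ B) :
    (τ * (a - b) ^ 2 + (f a - f b) ^ 2) ^ ((p - 2) / 2) * (f a - f b) * (A - B)
      ≤ |a - b| ^ (p - 2) * (a - b) *
          (A * ((τ + f' a ^ 2) ^ ((p - 2) / 2) * f' a)
            - B * ((τ + f' b ^ 2) ^ ((p - 2) / 2) * f' b)) := by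
  rcases eq_or_ne a b with hab | hab
  · subst hab; simp
  have hD : a - b ≠ 0 := sub_ne_zero.mpr hab
  have hDpos : 0 < |a - b| := abs_pos.mpr hD
  set q : ℝ := (p - 2) / 2 with hq
  set s : ℝ := (f a - f b) / (a - b) with hs
  -- key algebraic identity
  have h2abs : ((a - b) ^ 2 : ℝ) ^ q = |a - b| ^ (p - 2) := by
    rw [← sq_abs (a - b), ← Real.rpow_natCast |a - b| 2, ← Real.rpow_mul (abs_nonneg _)]
    norm_num [hq]
    congr 1
    ring
  have hJne : |a - b| ^ (p - 2) ≠ 0 :=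
    ne_of_gt (Real.rpow_pos_of_pos hDpos _)
  have hid : (τ * (a - b) ^ 2 + (f a - f b) ^ 2) ^ q * (f a - f b)
      = |a - b| ^ (p - 2) * (a - b) * ((τ + s ^ 2) ^ q * s) := by
    have h1 : τ + s ^ 2 = (τ * (a - b) ^ 2 + (f a - f b) ^ 2) / (a - b) ^ 2 := by
      field_simp [hs]
      rw [hs, add_mul, div_pow, div_mul_cancel₀ _ (pow_ne_zero 2 hD)]
    rw [h1, Real.div_rpow (by positivity) (by positivity), h2abs]
    field_simp [hs]
    rw [hs]; field_simp
  rw [hid]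
  -- slope bounds from convexity
  have hmono := g_mono (τ := τ) hp hτ
  rcases hD.lt_or_gt with hlt | hlt
  · -- a < b
    have hab' : a < b := by linarith
    have h1 : f' a ≤ slope f a b :=
      hconv.le_slope_of_hasDerivAt (Set.mem_univ a) (Set.mem_univ b) hab' (hderiv a)
    have h2 : slope f a b ≤ f' b :=
      hconv.slope_le_of_hasDerivAt (Set.mem_univ a) (Set.mem_univ b) hab' (hderiv b)
    have hslope : slope f a b = s := by
      rw [slope_def_field, hs]
      rw [div_eq_div_iff (by linarith) (sub_ne_zero.mpr hab)]
      ring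
    rw [hslope] at h1 h2
    have m1 : (τ + f' a ^ 2) ^ q * f' a ≤ (τ + s ^ 2) ^ q * s := hmono h1
    have m2 : (τ + s ^ 2) ^ q * s ≤ (τ + f' b ^ 2) ^ q * f' b := hmono h2
    have hJ : |a - b| ^ (p - 2) * (a - b) ≤ 0 :=
      mul_nonpos_of_nonneg_of_nonpos (Real.rpow_nonneg (abs_nonneg _) _) (by linarith)
    have hprod : 0 ≤ (-(|a - b| ^ (p - 2) * (a - b))) *
        (A * ((τ + s ^ 2) ^ q * s - (τ + f' a ^ 2) ^ q * f' a)
          + B * ((τ + f' b ^ 2) ^ q * f' b - (τ + s ^ 2) ^ q * s)) :=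
      mul_nonneg (by linarith)
        (add_nonneg (mul_nonneg hA (by linarith)) (mul_nonneg hB (by linarith)))
    nlinarith [hprod]
  · -- b < a
    have hab' : b < a := by linarith
    have h1 : f' b ≤ slope f b a :=
      hconv.le_slope_of_hasDerivAt (Set.mem_univ b) (Set.mem_univ a) hab' (hderiv b)
    have h2 : slope f b a ≤ f' a :=
      hconv.slope_le_of_hasDerivAt (Set.mem_univ b) (Set.mem_univ a) hab' (hderiv a)
    have hslope : slope f b a = s := by
      rw [slope_def_field, hs]
    rw [hslope] at h1 h2
    have m1 : (τ + s ^ 2) ^ q * s ≤ (τ + f' a ^ 2) ^ q * f' a := hmono h2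
    have m2 : (τ + f' b ^ 2) ^ q * f' b ≤ (τ + s ^ 2) ^ q * s := hmono h1
    have hJ : 0 ≤ |a - b| ^ (p - 2) * (a - b) :=
      mul_nonneg (Real.rpow_nonneg (abs_nonneg _) _) (by linarith)
    have hprod : 0 ≤ (|a - b| ^ (p - 2) * (a - b)) *
        (A * ((τ + f' a ^ 2) ^ q * f' a - (τ + s ^ 2) ^ q * s)
          + B * ((τ + s ^ 2) ^ q * s - (τ + f' b ^ 2) ^ q * f' b)) :=
      mul_nonneg hJ
        (add_nonneg (mul_nonneg hA (by linarith)) (mul_nonneg hB (by linarith)))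
    nlinarith [hprod]
end

section
/- Let 1 < p < ∞ and let g : ℝ → ℝ be continuously differentiable with g'(t) ≥ 0 for all t ∈ ℝ. Define G(t) := ∫_0^t g'(τ)^{1/p} dτ. Then for every a, b ∈ ℝ one has J_p(a − b) · (g(a) − g(b)) ≥ |G(a) − G(b)|^p. -/
open Real intervalIntegral MeasureTheory

lemma key_holder (p : ℝ) (hp : 1 < p) (g g' : ℝ → ℝ)
    (hderiv : ∀ x, HasDerivAt g (g' x) x) (hcont : Continuous g')
    (hmono : ∀ t, 0 ≤ g' t) (a b : ℝ) (hba : b ≤ a) :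
    |(∫ τ in (0:ℝ)..a, (g' τ) ^ (1 / p)) - ∫ τ in (0:ℝ)..b, (g' τ) ^ (1 / p)| ^ p
      ≤ |a - b| ^ (p - 2) * (a - b) * (g a - g b) := by
  rcases eq_or_lt_of_le hba with rfl | hba
  · simp [Real.zero_rpow (by positivity : p ≠ 0)]
  set f : ℝ → ℝ := fun τ => (g' τ) ^ (1 / p) with hf_def
  have hfc : Continuous f :=
    hcont.rpow_const fun x => Or.inr (by positivity)
  have hfnn : ∀ τ, 0 ≤ f τ := fun τ => Real.rpow_nonneg (hmono τ) _
  -- rewrite G a - G b as an integral over b..a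
  have hG : (∫ τ in (0:ℝ)..a, f τ) - ∫ τ in (0:ℝ)..b, f τ = ∫ τ in b..a, f τ :=
    integral_interval_sub_left (hfc.intervalIntegrable 0 a) (hfc.intervalIntegrable 0 b)
  have hGset : (∫ τ in b..a, f τ) = ∫ τ in Set.Ioc b a, f τ :=
    intervalIntegral.integral_of_le hba.le
  -- FTC for g
  have hgg : g a - g b = ∫ τ in Set.Ioc b a, g' τ := by
    rw [← intervalIntegral.integral_of_le hba.le]
    exact (intervalIntegral.integral_eq_sub_of_hasDerivAt (fun x _ => hderiv x)
      (hcont.intervalIntegrable b a)).symm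
  set μ : Measure ℝ := volume.restrict (Set.Ioc b a) with hμ
  have hfin : IsFiniteMeasure μ := by
    constructor
    rw [hμ, Measure.restrict_apply_univ, Real.volume_Ioc]
    exact ENNReal.ofReal_lt_top
  set q : ℝ := Real.conjExponent p with hq
  have hpq : p.HolderConjugate q := Real.HolderConjugate.conjExponent hp
  -- Memℒp for f
  have hbound : ∃ C, ∀ x ∈ Set.Icc b a, |f x| ≤ C := by
    obtain ⟨x₀, -, hx₀⟩ := isCompact_Icc.exists_isMaxOn (Set.nonempty_Icc.2 hba.le)
      (continuous_abs.comp hfc).continuousOn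
    exact ⟨|f x₀|, fun x hx => hx₀ hx⟩
  obtain ⟨C, hC⟩ := hbound
  have hmemtop : MemLp f ⊤ μ := by
    refine memLp_top_of_bound hfc.aestronglyMeasurable C ?_
    refine (ae_restrict_iff' measurableSet_Ioc).2 (ae_of_all _ fun x hx => ?_)
    exact hC x (Set.Icc_subset_Icc_left le_rfl (Set.Ioc_subset_Icc_self hx))
  have hmemf : MemLp f (ENNReal.ofReal p) μ := hmemtop.mono_exponent le_top
  have hmem1 : MemLp (fun _ : ℝ => (1:ℝ)) (ENNReal.ofReal q) μ := memLp_const 1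
  have hholder := MeasureTheory.integral_mul_le_Lp_mul_Lq_of_nonneg hpq
    (ae_of_all μ hfnn) (ae_of_all μ fun _ => zero_le_one) hmemf hmem1
  simp only [mul_one, Real.one_rpow] at hholder
  have hfp : ∀ x, f x ^ p = g' x := by
    intro x
    rw [hf_def, ← Real.rpow_mul (hmono x), one_div_mul_cancel (by positivity : p ≠ 0),
      Real.rpow_one]
  have hA : ∫ x, f x ^ p ∂μ = g a - g b := by
    rw [hgg]; exact integral_congr_ae (ae_of_all _ fun x => hfp x)
  have h1 : ∫ _ : ℝ, (1:ℝ) ∂μ = a - b := by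
    simp [hμ, Real.volume_Ioc, ENNReal.toReal_ofReal (sub_nonneg.2 hba.le), hba.le]
  rw [hA, h1] at hholder
  have hIp := Real.rpow_le_rpow (integral_nonneg fun x => hfnn x) hholder
    (by positivity : (0:ℝ) ≤ p)
  have hAnn : 0 ≤ g a - g b := by rw [hgg]; exact integral_nonneg fun x => hmono x
  have habnn : 0 ≤ a - b := sub_nonneg.2 hba.le
  have hmul : ((g a - g b) ^ (1/p) * (a - b) ^ (1/q)) ^ p
      = (g a - g b) * (a - b) ^ (p - 1) := by
    rw [Real.mul_rpow (Real.rpow_nonneg hAnn _) (Real.rpow_nonneg habnn _),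
      ← Real.rpow_mul hAnn, ← Real.rpow_mul habnn, one_div_mul_cancel (by positivity : p ≠ 0),
      Real.rpow_one]
    congr 1
    rw [show 1/q * p = p/q by ring, hpq.div_conj_eq_sub_one]
  rw [hmul] at hIp
  rw [hG, hGset, abs_of_nonneg (integral_nonneg fun x => hfnn x), abs_of_pos (sub_pos.2 hba)]
  calc (∫ x, f x ∂μ) ^ p ≤ (g a - g b) * (a - b) ^ (p - 1) := hIp
    _ = (a - b) ^ (p - 2) * (a - b) * (g a - g b) := by
        rw [show p - 1 = (p - 2) + 1 by ring,
          Real.rpow_add_one (sub_pos.2 hba).ne' (p - 2)]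
        ring

/-- Pointwise inequality towards Moser's iteration: for `g` of class `C¹` increasing
(`g' ≥ 0`) and `G(t) = ∫_0^t g'(τ)^{1/p} dτ`, one has
`J_p(a-b) (g(a) - g(b)) ≥ |G(a) - G(b)|^p`. -/
theorem stmt_6 (p : ℝ) (hp : 1 < p) (g g' : ℝ → ℝ)
    (hderiv : ∀ x, HasDerivAt g (g' x) x) (hcont : Continuous g')
    (hmono : ∀ t, 0 ≤ g' t) (a b : ℝ) :
    |(∫ τ in (0:ℝ)..a, (g' τ) ^ (1 / p)) - ∫ τ in (0:ℝ)..b, (g' τ) ^ (1 / p)| ^ p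
      ≤ |a - b| ^ (p - 2) * (a - b) * (g a - g b) := by
  rcases le_total b a with h | h
  · exact key_holder p hp g g' hderiv hcont hmono a b h
  · have := key_holder p hp g g' hderiv hcont hmono b a h
    have e1 : |a - b| = |b - a| := abs_sub_comm a b
    have e2 : (a - b) * (g a - g b) = (b - a) * (g b - g a) := by ring
    calc |(∫ τ in (0:ℝ)..a, (g' τ) ^ (1 / p)) - ∫ τ in (0:ℝ)..b, (g' τ) ^ (1 / p)| ^ p
        = |(∫ τ in (0:ℝ)..b, (g' τ) ^ (1 / p)) - ∫ τ in (0:ℝ)..a, (g' τ) ^ (1 / p)| ^ p := by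
          rw [abs_sub_comm]
      _ ≤ |b - a| ^ (p - 2) * (b - a) * (g b - g a) := this
      _ = |a - b| ^ (p - 2) * (a - b) * (g a - g b) := by rw [← e1, mul_assoc, mul_assoc, ← e2]
end

section
/- Let 1 < p < ∞ and β ≥ 1. Then for every a, b ≥ 0 one has |a − b|^p · (a^{β−1} + b^{β−1}) ≤ max{1, 3 − β} · |a − b|^{p−2} · (a − b) · (a^β − b^β). -/
open Real

-- derivative step
lemma deriv_key (β : ℝ) (hβ1 : 1 ≤ β) (hβ2 : β ≤ 2) {x : ℝ} (hx : 0 < x) :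
    1 ≤ (2-β) * (β * x ^ (β-1)) + (β-1) * x ^ (β-2) := by
  have h := Real.geom_mean_le_arith_mean2_weighted (by linarith : (0:ℝ) ≤ 2-β)
    (by linarith : (0:ℝ) ≤ β-1) (by positivity : (0:ℝ) ≤ β * x ^ (β-1))
    (by positivity : (0:ℝ) ≤ x ^ (β-2)) (by ring)
  refine le_trans ?_ h
  have e1 : (β * x ^ (β-1)) ^ (2-β) = β ^ (2-β) * (x ^ (β-1)) ^ (2-β) :=
    Real.mul_rpow (by linarith) (by positivity)
  have e2 : (x ^ (β-1)) ^ (2-β) = x ^ ((β-1)*(2-β)) := (Real.rpow_mul hx.le _ _).symm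
  have e3 : (x ^ (β-2)) ^ (β-1) = x ^ ((β-2)*(β-1)) := (Real.rpow_mul hx.le _ _).symm
  have e4 : x ^ ((β-1)*(2-β)) * x ^ ((β-2)*(β-1)) = x ^ ((β-1)*(2-β) + (β-2)*(β-1)) :=
    (Real.rpow_add hx _ _).symm
  have e5 : (β-1)*(2-β) + (β-2)*(β-1) = 0 := by ring
  rw [e1, e2, e3, mul_assoc, e4, e5, Real.rpow_zero, mul_one]
  exact Real.one_le_rpow hβ1 (by linarith)

lemma core (β t : ℝ) (hβ1 : 1 ≤ β) (hβ2 : β ≤ 2) (ht0 : 0 ≤ t) (ht1 : t ≤ 1) :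
    t ^ (β-1) - t ≤ (2-β) * (1 - t^β) := by
  rcases eq_or_lt_of_le ht0 with h0 | h0
  · rcases eq_or_lt_of_le hβ1 with h1 | h1
    · simp [← h0, ← h1]; norm_num
    · rw [← h0, Real.zero_rpow (by linarith), Real.zero_rpow (by linarith)]
      linarith
  rcases eq_or_lt_of_le ht1 with h1 | h1
  · simp [h1]
  -- 0 < t < 1, use antitonicity of f on [t,1]
  set f : ℝ → ℝ := fun x => (2-β)*(1 - x^β) - x^(β-1) + x with hf
  have hder : ∀ x ∈ Set.Ioo t 1, HasDerivAt f
      ((2-β)*(0 - β * x^(β-1)) - (β-1)*x^(β-1-1) + 1) x := by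
    intro x hx
    have hx0 : x ≠ 0 := (h0.trans hx.1).ne'
    exact (((hasDerivAt_const x (2-β)).mul ((hasDerivAt_const x (1:ℝ)).sub
      (Real.hasDerivAt_rpow_const (Or.inl hx0)))).sub
      (Real.hasDerivAt_rpow_const (Or.inl hx0))).add (hasDerivAt_id x) |>.congr_deriv (by ring)
  have hcont : ContinuousOn f (Set.Icc t 1) := by
    intro x hx
    have hx0 : x ≠ 0 := by have := hx.1; intro h; rw [h] at this; linarith
    exact (((continuousAt_const.mul (continuousAt_const.sub
      (Real.continuousAt_rpow_const x β (Or.inl hx0)))).sub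
      (Real.continuousAt_rpow_const x (β-1) (Or.inl hx0))).add continuousAt_id).continuousWithinAt
  have hanti : AntitoneOn f (Set.Icc t 1) := by
    have hint : interior (Set.Icc t 1) = Set.Ioo t 1 := interior_Icc
    apply antitoneOn_of_deriv_nonpos (convex_Icc t 1) hcont
    · rw [hint]; exact fun x hx => ((hder x hx).differentiableAt).differentiableWithinAt
    · rw [hint]; intro x hx
      rw [(hder x hx).deriv]
      have hx0 : 0 < x := h0.trans hx.1
      have hkey := deriv_key β hβ1 hβ2 hx0
      have : x ^ (β-1-1) = x ^ (β-2) := by congr 1; ring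
      rw [this]; nlinarith [hkey]
  have h := hanti (Set.left_mem_Icc.2 h1.le) (Set.right_mem_Icc.2 h1.le) h1.le
  have hf1 : f 1 = 0 := by simp [hf]
  rw [hf1] at h
  simp only [hf] at h
  linarith

lemma key (β a b : ℝ) (hβ : 1 ≤ β) (hb : 0 ≤ b) (hba : b ≤ a) :
    (a - b) * (a^(β-1) + b^(β-1)) ≤ max 1 (3-β) * (a^β - b^β) := by
  have ha : 0 ≤ a := hb.trans hba
  rcases le_total β 2 with h2 | h2
  · -- 1 ≤ β ≤ 2
    rw [max_eq_right (by linarith : (1:ℝ) ≤ 3 - β)]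
    rcases eq_or_lt_of_le ha with ha0 | ha0
    · have hb0 : b = 0 := le_antisymm (hba.trans ha0.symm.le) hb
      rw [← ha0, hb0]
      simp only [sub_self, zero_mul, mul_zero, le_refl]
    · set t := b / a with htdef
      have ht0 : 0 ≤ t := div_nonneg hb ha
      have ht1 : t ≤ 1 := (div_le_one ha0).2 hba
      have hbt : b = t * a := by rw [htdef]; field_simp
      have hc := core β t hβ h2 ht0 ht1
      have htX : t ^ β = t * t ^ (β-1) := by
        have : t ^ β = t ^ (1 + (β-1)) := by norm_num
        rw [this, Real.rpow_add_of_nonneg ht0 zero_le_one (by linarith), Real.rpow_one]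
      have key2 : (1-t)*(1+t^(β-1)) ≤ (3-β)*(1-t^β) := by nlinarith [hc, htX]
      have hA : (0:ℝ) ≤ a^(β-1) * a := mul_nonneg (Real.rpow_nonneg ha _) ha
      have hfin := mul_le_mul_of_nonneg_left key2 hA
      have eb1 : b^(β-1) = t^(β-1) * a^(β-1) := by
        rw [hbt, Real.mul_rpow ht0 ha]
      have eb2 : b^β = t^β * a^β := by rw [hbt, Real.mul_rpow ht0 ha]
      have ea : a^β = a^(β-1) * a := by
        have : a^β = a^((β-1)+1) := by norm_num
        rw [this, Real.rpow_add_of_nonneg ha (by linarith) zero_le_one, Real.rpow_one]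
      rw [eb1, eb2, ea, hbt]
      nlinarith [hfin]
  · -- β ≥ 2
    rw [max_eq_left (by linarith : 3 - β ≤ (1:ℝ))]
    have e1 : a^β = a^(β-1) * a := by
      have : a^β = a^((β-1)+1) := by norm_num
      rw [this, Real.rpow_add_of_nonneg ha (by linarith) zero_le_one, Real.rpow_one]
    have e2 : b^β = b^(β-1) * b := by
      have : b^β = b^((β-1)+1) := by norm_num
      rw [this, Real.rpow_add_of_nonneg hb (by linarith) zero_le_one, Real.rpow_one]
    have e3 : a^(β-1) = a^(β-2) * a := by
      have : a^(β-1) = a^((β-2)+1) := by congr 1; ring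
      rw [this, Real.rpow_add_of_nonneg ha (by linarith) zero_le_one, Real.rpow_one]
    have e4 : b^(β-1) = b^(β-2) * b := by
      have : b^(β-1) = b^((β-2)+1) := by congr 1; ring
      rw [this, Real.rpow_add_of_nonneg hb (by linarith) zero_le_one, Real.rpow_one]
    have e5 : b^(β-2) ≤ a^(β-2) := Real.rpow_le_rpow hb hba (by linarith)
    -- need a*b^{β-1} ≤ b*a^{β-1}
    have e6 : a * b^(β-1) ≤ b * a^(β-1) := by
      rw [e3, e4]; nlinarith [mul_nonneg ha hb, e5]
    rw [e1, e2, one_mul]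
    nlinarith [e6]

lemma main2 (p β : ℝ) (hp : 1 < p) (hβ : 1 ≤ β) (a b : ℝ) (hb : 0 ≤ b) (hba : b ≤ a) :
    |a - b| ^ p * (a ^ (β - 1) + b ^ (β - 1))
      ≤ max 1 (3 - β) * (|a - b| ^ (p - 2) * (a - b)) * (a ^ β - b ^ β) := by
  rcases eq_or_lt_of_le hba with heq | hlt
  · subst heq
    simp [Real.zero_rpow (by linarith : p ≠ 0)]
  · have hab : 0 < a - b := by linarith
    rw [abs_of_pos hab]
    have hk := key β a b hβ hb hba
    have hpow : (0:ℝ) ≤ (a-b)^(p-1) := Real.rpow_nonneg hab.le _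
    have ep : (a-b)^p = (a-b)^(p-1) * (a-b) := by
      have : (a-b)^p = (a-b)^((p-1)+1) := by norm_num
      rw [this, Real.rpow_add hab, Real.rpow_one]
    have ep2 : (a-b)^(p-2) * (a-b) = (a-b)^(p-1) := by
      have : (a-b)^(p-1) = (a-b)^((p-2)+1) := by congr 1; ring
      rw [this, Real.rpow_add hab, Real.rpow_one]
    rw [ep, ep2]
    nlinarith [mul_le_mul_of_nonneg_left hk hpow]

/-- For `β ≥ 1` and `a, b ≥ 0`:
`|a-b|^p (a^{β-1} + b^{β-1}) ≤ max{1, 3-β} · |a-b|^{p-2} (a-b) (a^β - b^β)`. -/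
theorem stmt_7 (p β : ℝ) (hp : 1 < p) (hβ : 1 ≤ β) (a b : ℝ) (ha : 0 ≤ a) (hb : 0 ≤ b) :
    |a - b| ^ p * (a ^ (β - 1) + b ^ (β - 1))
      ≤ max 1 (3 - β) * (|a - b| ^ (p - 2) * (a - b)) * (a ^ β - b ^ β) := by
  rcases le_total b a with h | h
  · exact main2 p β hp hβ a b hb h
  · have := main2 p β hp hβ b a ha h
    rw [abs_sub_comm b a] at this
    nlinarith [this]
end

section
/- Let β ≥ 1 and 0 ≤ t < 1. Then (1 − t) · (1 + t^{β−1}) ≤ max{1, 3 − β} · (1 − t^β). -/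
open Real

/-- For `β ≥ 1` and `0 ≤ t < 1`: `(1-t)(1 + t^{β-1}) ≤ max{1, 3-β} (1 - t^β)`. -/
theorem stmt_8 (β t : ℝ) (hβ : 1 ≤ β) (ht0 : 0 ≤ t) (ht1 : t < 1) :
    (1 - t) * (1 + t ^ (β - 1)) ≤ max 1 (3 - β) * (1 - t ^ β) := by
  rcases eq_or_lt_of_le ht0 with h0 | h0
  · rcases eq_or_lt_of_le hβ with hb | hb
    · rw [← h0, ← hb]
      norm_num [Real.rpow_natCast]
    · rw [← h0, Real.zero_rpow (by linarith : β - 1 ≠ 0),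
        Real.zero_rpow (by linarith : β ≠ 0)]
      have h1 : (1:ℝ) ≤ max 1 (3 - β) := le_max_left _ _
      nlinarith
  · have hs1 : t ^ (β - 1) ≤ 1 := Real.rpow_le_one ht0 ht1.le (by linarith)
    have hs0 : 0 < t ^ (β - 1) := Real.rpow_pos_of_pos h0 _
    have htβ : t ^ β = t ^ (β - 1) * t := by
      rw [← Real.rpow_add_one h0.ne' (β - 1)]
      ring_nf
    rcases le_total β 2 with hb2 | hb2
    · have hmax : max 1 (3 - β) = 3 - β := max_eq_right (by linarith)
      have key : t ^ (β - 1) ≤ (2 - β) + (β - 1) * t := by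
        have h := Real.geom_mean_le_arith_mean2_weighted
          (by linarith : (0:ℝ) ≤ 2 - β) (by linarith : (0:ℝ) ≤ β - 1)
          zero_le_one ht0 (by ring)
        simpa using h
      rw [hmax, htβ]
      nlinarith [mul_nonneg (sub_nonneg.2 hb2)
        (mul_nonneg h0.le (sub_nonneg.2 hs1))]
    · have hmax : max 1 (3 - β) = 1 := max_eq_left (by linarith)
      have key : t ^ (β - 1) ≤ t := by
        calc t ^ (β - 1) ≤ t ^ (1:ℝ) :=
              Real.rpow_le_rpow_of_exponent_ge h0 ht1.le (by linarith)
          _ = t := Real.rpow_one t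
      rw [hmax, htβ]
      nlinarith
end

section
/- Let 1 < p < ∞ and let U, V ∈ ℝ satisfy U·V ≤ 0. Define g(t) := |U − t·V|^p + J_p(U − V)·V·|t|^p for t ∈ ℝ. Then for every t ∈ ℝ one has g(t) ≤ g(1) = J_p(U − V)·U; equivalently, |U − t·V|^p + J_p(U − V)·V·|t|^p ≤ J_p(U − V)·U for all t ∈ ℝ. -/
open Real

lemma key_ineq (p : ℝ) (hp : 1 < p) (a b x : ℝ) (ha : 0 ≤ a) (hb : 0 ≤ b) (hx : 0 ≤ x) :
    (a + b * x) ^ p ≤ (a + b) ^ (p - 1) * (a + b * x ^ p) := by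
  rcases eq_or_lt_of_le (add_nonneg ha hb) with h | h
  · have ha0 : a = 0 := by nlinarith
    have hb0 : b = 0 := by nlinarith
    simp [ha0, hb0, Real.zero_rpow (by positivity : p ≠ 0)]
  · set s := a + b with hs
    have hconv := (convexOn_rpow hp.le).2 (Set.mem_Ici.mpr zero_le_one)
      (Set.mem_Ici.mpr hx) (by positivity : (0:ℝ) ≤ a / s) (by positivity : (0:ℝ) ≤ b / s)
      (by field_simp; exact hs.symm)
    simp only [smul_eq_mul, mul_one, Real.one_rpow] at hconv
    have h1 : a / s + b / s * x = (a + b * x) / s := by field_simp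
    rw [h1, Real.div_rpow (by positivity) h.le] at hconv
    have hsp : 0 < s ^ p := Real.rpow_pos_of_pos h p
    rw [div_le_iff₀ hsp] at hconv
    calc (a + b * x) ^ p ≤ (a / s + b / s * x ^ p) * s ^ p := hconv
      _ = s ^ (p - 1) * (a + b * x ^ p) := by
          rw [Real.rpow_sub h, Real.rpow_one]
          field_simp

lemma aux_ineq (p : ℝ) (hp : 1 < p) (U V : ℝ) (hU : 0 ≤ U) (hV : V ≤ 0) (t : ℝ) :
    |U - t * V| ^ p + (|U - V| ^ (p - 2) * (U - V)) * V * |t| ^ p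
      ≤ |U - V| ^ (p - 2) * (U - V) * U := by
  have hUV : 0 ≤ U - V := by linarith
  rw [abs_of_nonneg hUV]
  rcases eq_or_lt_of_le hUV with h | h
  · have hU0 : U = 0 := le_antisymm (by linarith) hU
    have hV0 : V = 0 := by linarith
    simp [hU0, hV0, Real.zero_rpow (by positivity : p ≠ 0)]
  · have e : (U - V) ^ (p - 2) * (U - V) = (U - V) ^ (p - 1) := by
      rw [show p - 2 = (p - 1) - 1 by ring, Real.rpow_sub h, Real.rpow_one,
        div_mul_cancel₀ _ (ne_of_gt h)]
    rw [mul_assoc ((U-V) ^ (p-2)) (U-V) U, mul_assoc, e, ← mul_assoc]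
    have step1 : |U - t * V| ≤ U + (-V) * |t| := by
      calc |U - t * V| ≤ |U| + |t * V| := abs_sub _ _
        _ = U + (-V) * |t| := by
            rw [abs_of_nonneg hU, abs_mul, abs_of_nonpos hV]; ring
    have step2 : |U - t * V| ^ p ≤ (U + (-V) * |t|) ^ p :=
      Real.rpow_le_rpow (abs_nonneg _) step1 (by positivity)
    have step3 := key_ineq p hp U (-V) |t| hU (by linarith) (abs_nonneg t)
    have step4 : |U - t * V| ^ p ≤ (U + -V) ^ (p - 1) * (U + -V * |t| ^ p) :=
      step2.trans step3
    have he : (U + -V) = U - V := by ring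
    rw [he] at step4
    nlinarith [step4]

/-- For `U·V ≤ 0`, the function `g(t) = |U - tV|^p + J_p(U-V)·V·|t|^p` attains its maximum at
`t = 1`, with `g(1) = J_p(U-V)·U`; equivalently, for all `t`,
`|U - tV|^p + J_p(U-V)·V·|t|^p ≤ J_p(U-V)·U`, where `J_p(t) = |t|^{p-2} t`. -/
theorem stmt_10 (p : ℝ) (hp : 1 < p) (U V : ℝ) (hUV : U * V ≤ 0) (t : ℝ) :
    |U - t * V| ^ p + (|U - V| ^ (p - 2) * (U - V)) * V * |t| ^ p
      ≤ |U - V| ^ (p - 2) * (U - V) * U := by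
  rcases mul_nonpos_iff.mp hUV with ⟨hU, hV⟩ | ⟨hU, hV⟩
  · exact aux_ineq p hp U V hU hV t
  · have h2 := aux_ineq p hp (-U) (-V) (by linarith) (by linarith) t
    have e1 : -U - t * -V = -(U - t * V) := by ring
    have e2 : -U - -V = -(U - V) := by ring
    rw [e1, e2, abs_neg, abs_neg] at h2
    nlinarith [h2]
end

section
/- Let 1 < p < ∞ and let a, b ∈ ℝ satisfy a·b ≤ 0. If 1 < p ≤ 2, then J_p(a − b)·a ≥ |a|^p − (p − 1)·|a − b|^{p−2}·a·b; if p > 2, then J_p(a − b)·a ≥ |a|^p − (p − 1)·|a|^{p−2}·a·b. -/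
open Real

-- tangent line inequality, concave case: q ∈ (0,1]
lemma core1 (q s r : ℝ) (hq0 : 0 < q) (hq1 : q ≤ 1) (hs : 0 ≤ s) (hr : 0 ≤ r) :
    s ^ q + q * r * (s + r) ^ (q - 1) ≤ (s + r) ^ q := by
  rcases eq_or_lt_of_le (add_nonneg hs hr) with ht | ht
  · have hs0 : s = 0 := by linarith
    have hr0 : r = 0 := by linarith
    simp [hs0, hr0, Real.zero_rpow hq0.ne']
  · set t := s + r with htdef
    have hu0 : 0 ≤ s / t := div_nonneg hs ht.le
    have hu1 : -1 ≤ s / t - 1 := by linarith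
    have hb := rpow_one_add_le_one_add_mul_self hu1 hq0.le hq1
    rw [add_sub_cancel] at hb
    -- hb : (s/t)^q ≤ 1 + q * (s/t - 1)
    have hsq : s ^ q = t ^ q * (s / t) ^ q := by
      rw [← Real.mul_rpow ht.le hu0, mul_div_cancel₀ _ ht.ne']
    have ht1 : t ^ (q - 1) = t ^ q / t := Real.rpow_sub_one ht.ne' q
    have htq : 0 ≤ t ^ q := Real.rpow_nonneg ht.le q
    have key : t ^ q * (s / t) ^ q ≤ t ^ q * (1 + q * (s / t - 1)) :=
      mul_le_mul_of_nonneg_left hb htq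
    have hst : s / t - 1 = -(r / t) := by field_simp; linarith
    rw [hst] at key
    have : t ^ q * (1 + q * -(r / t)) = t ^ q - q * r * (t ^ q / t) := by
      field_simp; ring
    rw [this] at key
    rw [hsq, ht1]
    linarith

-- tangent line inequality, convex case: q ≥ 1
lemma core2 (q s r : ℝ) (hq1 : 1 ≤ q) (hs : 0 < s) (hr : 0 ≤ r) :
    s ^ q + q * r * s ^ (q - 1) ≤ (s + r) ^ q := by
  have hx : -1 ≤ r / s := le_trans (by norm_num) (div_nonneg hr hs.le)
  have hb := one_add_mul_self_le_rpow_one_add hx hq1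
  have hmul : (1 + r / s) ^ q * s ^ q = (s + r) ^ q := by
    rw [← Real.mul_rpow (by positivity) hs.le]
    congr 1
    field_simp
  have hsq : 0 < s ^ q := Real.rpow_pos_of_pos hs q
  have key : (1 + q * (r / s)) * s ^ q ≤ (1 + r / s) ^ q * s ^ q :=
    mul_le_mul_of_nonneg_right hb hsq.le
  rw [hmul] at key
  have ht1 : s ^ (q - 1) = s ^ q / s := Real.rpow_sub_one hs.ne' q
  have : (1 + q * (r / s)) * s ^ q = s ^ q + q * r * (s ^ q / s) := by
    field_simp
  rw [this, ← ht1] at key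
  exact key

/-- For `a·b ≤ 0`: if `1 < p ≤ 2` then `J_p(a-b)·a ≥ |a|^p - (p-1)|a-b|^{p-2} a b`;
if `p > 2` then `J_p(a-b)·a ≥ |a|^p - (p-1)|a|^{p-2} a b`, where `J_p(t) = |t|^{p-2} t`. -/
theorem stmt_11 (p : ℝ) (hp : 1 < p) (a b : ℝ) (hab : a * b ≤ 0) :
    (p ≤ 2 → |a| ^ p - (p - 1) * |a - b| ^ (p - 2) * a * b ≤ |a - b| ^ (p - 2) * (a - b) * a) ∧
    (2 < p → |a| ^ p - (p - 1) * |a| ^ (p - 2) * a * b ≤ |a - b| ^ (p - 2) * (a - b) * a) := by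
  have hp0 : p ≠ 0 := by positivity
  rcases eq_or_ne a 0 with rfl | ha
  · simp [Real.zero_rpow hp0]
  have habs : 0 < |a| := abs_pos.mpr ha
  have habm : a * b = -(|a| * |b|) := by
    have h := abs_of_nonpos hab
    rw [abs_mul] at h
    linarith
  have haa : a * a = |a| * |a| := (abs_mul_abs_self a).symm
  have hdiff : |a - b| = |a| + |b| := by
    rcases le_total 0 a with ha1 | ha1 <;> rcases le_total 0 b with hb1 | hb1
    · have h0 : a * b = 0 := le_antisymm hab (mul_nonneg ha1 hb1)
      rcases mul_eq_zero.mp h0 with h | h <;> simp [h, abs_of_nonneg, ha1, hb1]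
    · rw [abs_of_nonneg ha1, abs_of_nonpos hb1, abs_of_nonneg (by linarith)]; ring
    · rw [abs_of_nonpos ha1, abs_of_nonneg hb1, abs_of_nonpos (by linarith)]; ring
    · have h0 : a * b = 0 := le_antisymm hab (by nlinarith)
      rcases mul_eq_zero.mp h0 with h | h <;> simp [h, abs_of_nonpos, ha1, hb1]
  have ht : 0 < |a| + |b| := by positivity
  have hq1 : p - 1 - 1 = p - 2 := by ring
  have hA : |a| ^ p = |a| ^ (p - 1) * |a| := by
    rw [← Real.rpow_add_one habs.ne' (p - 1)]
    norm_num
  have hT : (|a| + |b|) ^ (p - 1) = (|a| + |b|) ^ (p - 2) * (|a| + |b|) := by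
    rw [← Real.rpow_add_one ht.ne' (p - 2)]
    congr 1
    ring
  have rhs_eq : (|a| + |b|) ^ (p - 2) * (a - b) * a = |a| * (|a| + |b|) ^ (p - 1) := by
    linear_combination (|a| + |b|) ^ (p - 2) * haa - (|a| + |b|) ^ (p - 2) * habm - |a| * hT
  constructor
  · intro hp2
    have key := core1 (p - 1) |a| |b| (by linarith) (by linarith) (abs_nonneg a) (abs_nonneg b)
    rw [hq1] at key
    have key' : |a| * (|a| ^ (p - 1) + (p - 1) * |b| * (|a| + |b|) ^ (p - 2)) ≤
        |a| * (|a| + |b|) ^ (p - 1) := mul_le_mul_of_nonneg_left key (abs_nonneg a)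
    have lhs_eq : |a| ^ p - (p - 1) * |a - b| ^ (p - 2) * a * b =
        |a| * (|a| ^ (p - 1) + (p - 1) * |b| * (|a| + |b|) ^ (p - 2)) := by
      rw [hdiff]
      linear_combination hA - (p - 1) * (|a| + |b|) ^ (p - 2) * habm
    rw [lhs_eq, hdiff, rhs_eq]
    exact key'
  · intro hp2
    have key := core2 (p - 1) |a| |b| (by linarith) habs (abs_nonneg b)
    rw [hq1] at key
    have key' : |a| * (|a| ^ (p - 1) + (p - 1) * |b| * |a| ^ (p - 2)) ≤
        |a| * (|a| + |b|) ^ (p - 1) := mul_le_mul_of_nonneg_left key (abs_nonneg a)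
    have lhs_eq : |a| ^ p - (p - 1) * |a| ^ (p - 2) * a * b =
        |a| * (|a| ^ (p - 1) + (p - 1) * |b| * |a| ^ (p - 2)) := by
      linear_combination hA - (p - 1) * |a| ^ (p - 2) * habm
    rw [lhs_eq, hdiff, rhs_eq]
    exact key'
end

section
/- Let 1 < p < ∞. There exists a constant c_p > 0, depending only on p, such that for every a, b ∈ ℝ one has |a − b|^p ≤ |a|^p + |b|^p + c_p · (a² + b²)^{(p−2)/2} · |a·b|. -/
open Real

private lemma aux1 {p u : ℝ} (hp : 1 ≤ p) (hu0 : 0 ≤ u) (hu1 : u ≤ 1) :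
    1 - u ^ p ≤ p * (1 - u) := by
  have h := one_add_mul_self_le_rpow_one_add (s := u - 1) (by linarith) hp
  have he : 1 + (u - 1) = u := by ring
  rw [he] at h
  nlinarith [h]

private lemma aux2 {p u v : ℝ} (hp : 1 ≤ p) (hu : 0 ≤ u) (hv : 0 ≤ v)
    (huv : u + v = 1) : 1 - u ^ p - v ^ p ≤ 2 * p * (u * v) := by
  have hu1 : u ≤ 1 := by linarith
  have hv1 : v ≤ 1 := by linarith
  have hup : 0 ≤ u ^ p := Real.rpow_nonneg hu p
  have hvp : 0 ≤ v ^ p := Real.rpow_nonneg hv p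
  rcases le_total u v with h | h
  · have h1 : 1 - v ^ p ≤ p * (1 - v) := aux1 hp hv hv1
    nlinarith [h1, mul_nonneg (mul_nonneg (by linarith : (0:ℝ) ≤ p) hu)
      (by linarith : (0:ℝ) ≤ 2*v - 1)]
  · have h1 : 1 - u ^ p ≤ p * (1 - u) := aux1 hp hu hu1
    nlinarith [h1, mul_nonneg (mul_nonneg (by linarith : (0:ℝ) ≤ p) hv)
      (by linarith : (0:ℝ) ≤ 2*u - 1)]

private lemma aux3 {p x y : ℝ} (hp : 1 ≤ p) (hx : 0 ≤ x) (hy : 0 ≤ y) :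
    (x + y) ^ p ≤ x ^ p + y ^ p + 2 * p * (x * y) * (x + y) ^ (p - 2) := by
  rcases eq_or_lt_of_le (add_nonneg hx hy) with hs | hs
  · have hx0 : x = 0 := by linarith
    have hy0 : y = 0 := by linarith
    subst hx0; subst hy0
    simp [Real.zero_rpow (by positivity : p ≠ 0)]
  · set s := x + y with hsdef
    have hs' : s ≠ 0 := ne_of_gt hs
    have huv : x / s + y / s = 1 := by field_simp; exact hsdef.symm
    have key := aux2 hp (by positivity) (by positivity) huv
    have hxp : x ^ p = s ^ p * (x / s) ^ p := by
      rw [← Real.mul_rpow (le_of_lt hs) (by positivity)]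
      congr 1; field_simp
    have hyp : y ^ p = s ^ p * (y / s) ^ p := by
      rw [← Real.mul_rpow (le_of_lt hs) (by positivity)]
      congr 1; field_simp
    have hsp : 0 < s ^ p := Real.rpow_pos_of_pos hs p
    have hspsplit : s ^ p = s ^ (p - 2) * s ^ (2:ℝ) := by
      rw [← Real.rpow_add hs]; ring_nf
    have hs2 : s ^ (2:ℝ) = s * s := by
      rw [show (2:ℝ) = ((2:ℕ):ℝ) by norm_num, Real.rpow_natCast]; ring
    have hkey2 : s ^ p * (1 - (x/s) ^ p - (y/s) ^ p) ≤ s ^ p * (2 * p * (x/s * (y/s))) :=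
      mul_le_mul_of_nonneg_left key (le_of_lt hsp)
    have hrhs : s ^ p * (2 * p * (x/s * (y/s))) = 2 * p * (x * y) * s ^ (p - 2) := by
      rw [hspsplit, hs2]; field_simp
    calc s ^ p = s ^ p * (x/s) ^ p + s ^ p * (y/s) ^ p
          + s ^ p * (1 - (x/s) ^ p - (y/s) ^ p) := by ring
      _ ≤ s ^ p * (x/s) ^ p + s ^ p * (y/s) ^ p
          + 2 * p * (x * y) * s ^ (p - 2) := by rw [← hrhs]; linarith [hkey2]
      _ = x ^ p + y ^ p + 2 * p * (x * y) * s ^ (p - 2) := by rw [hxp, hyp]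

/-- There is `c_p > 0` such that for all `a, b ∈ ℝ`:
`|a-b|^p ≤ |a|^p + |b|^p + c_p (a² + b²)^{(p-2)/2} |ab|`. -/
theorem stmt_12 (p : ℝ) (hp : 1 < p) :
    ∃ c : ℝ, 0 < c ∧ ∀ a b : ℝ,
      |a - b| ^ p ≤ |a| ^ p + |b| ^ p + c * (a ^ 2 + b ^ 2) ^ ((p - 2) / 2) * |a * b| := by
  have hp1 : 1 ≤ p := le_of_lt hp
  have hp0 : 0 < p := lt_trans one_pos hp
  have key : ∀ a b : ℝ,
      |a - b| ^ p ≤ |a| ^ p + |b| ^ p + 2 * p * (|a| * |b|) * (|a| + |b|) ^ (p - 2) := by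
    intro a b
    calc |a - b| ^ p ≤ (|a| + |b|) ^ p :=
          Real.rpow_le_rpow (abs_nonneg _) (abs_sub a b) (le_of_lt hp0)
      _ ≤ _ := aux3 hp1 (abs_nonneg a) (abs_nonneg b)
  have heq : ∀ x y : ℝ, 0 ≤ x → 0 ≤ y →
      (x + y) ^ (p - 2) = ((x + y) ^ 2) ^ ((p - 2) / 2) := by
    intro x y hx hy
    have h2 := Real.rpow_natCast_mul (by positivity : (0:ℝ) ≤ x + y) 2 ((p - 2)/2)
    rw [show ((2:ℕ):ℝ) * ((p - 2)/2) = p - 2 by push_cast; ring] at h2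
    exact h2
  rcases le_or_gt 2 p with h2 | h2
  · -- p ≥ 2 : c = 2 * p * 2 ^ ((p-2)/2)
    refine ⟨2 * p * (2:ℝ) ^ ((p - 2)/2), by positivity, fun a b => ?_⟩
    rcases eq_or_ne a 0 with rfl | ha
    · simp [Real.zero_rpow (ne_of_gt hp0)]
    rcases eq_or_ne b 0 with rfl | hb
    · simp [Real.zero_rpow (ne_of_gt hp0)]
    have h := key a b
    have habs : |a * b| = |a| * |b| := abs_mul a b
    have hsq : a ^ 2 + b ^ 2 = |a| ^ 2 + |b| ^ 2 := by rw [sq_abs, sq_abs]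
    set x := |a| with hx
    set y := |b| with hy
    have hx0 : 0 < x := abs_pos.mpr ha
    have hy0 : 0 < y := abs_pos.mpr hb
    have hbound : (x + y) ^ (p - 2) ≤ (2:ℝ) ^ ((p-2)/2) * (x ^ 2 + y ^ 2) ^ ((p - 2)/2) := by
      calc (x + y) ^ (p - 2) = ((x + y) ^ 2) ^ ((p - 2)/2) :=
            heq x y (le_of_lt hx0) (le_of_lt hy0)
        _ ≤ (2 * (x ^ 2 + y ^ 2)) ^ ((p - 2)/2) :=
            Real.rpow_le_rpow (by positivity) (by nlinarith [sq_nonneg (x - y)]) (by linarith)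
        _ = (2:ℝ) ^ ((p-2)/2) * (x ^ 2 + y ^ 2) ^ ((p - 2)/2) :=
            Real.mul_rpow (by norm_num) (by positivity)
    rw [habs, hsq]
    have hmul := mul_le_mul_of_nonneg_left hbound
      (by positivity : (0:ℝ) ≤ 2 * p * (x * y))
    nlinarith [hmul, h]
  · -- 1 < p < 2 : c = 2 * p
    refine ⟨2 * p, by positivity, fun a b => ?_⟩
    rcases eq_or_ne a 0 with rfl | ha
    · simp [Real.zero_rpow (ne_of_gt hp0)]
    rcases eq_or_ne b 0 with rfl | hb
    · simp [Real.zero_rpow (ne_of_gt hp0)]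
    have h := key a b
    have habs : |a * b| = |a| * |b| := abs_mul a b
    have hsq : a ^ 2 + b ^ 2 = |a| ^ 2 + |b| ^ 2 := by rw [sq_abs, sq_abs]
    set x := |a| with hx
    set y := |b| with hy
    have hx0 : 0 < x := abs_pos.mpr ha
    have hy0 : 0 < y := abs_pos.mpr hb
    have hbound : (x + y) ^ (p - 2) ≤ (x ^ 2 + y ^ 2) ^ ((p - 2)/2) := by
      calc (x + y) ^ (p - 2) = ((x + y) ^ 2) ^ ((p - 2)/2) :=
            heq x y (le_of_lt hx0) (le_of_lt hy0)
        _ ≤ (x ^ 2 + y ^ 2) ^ ((p - 2)/2) :=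
            Real.rpow_le_rpow_of_nonpos (by positivity) (by nlinarith [mul_pos hx0 hy0])
              (by linarith)
    rw [habs, hsq]
    have hmul := mul_le_mul_of_nonneg_left hbound
      (by positivity : (0:ℝ) ≤ 2 * p * (x * y))
    nlinarith [hmul, h]
end

section
/- Let 1 < p < ∞, let U, V ∈ ℝ satisfy U·V ≤ 0, and let ω₁, ω₂ ∈ ℝ satisfy ω₁² + ω₂² = 1. Then |ω₁·U − ω₁·V|^{p−2}·(ω₁·U − ω₁·V)·ω₁·U − |ω₂·U − ω₂·V|^{p−2}·(ω₂·U − ω₂·V)·ω₂·V ≥ |ω₁·U − ω₂·V|^p; equivalently, |ω₁|^p · J_p(U − V)·U − |ω₂|^p · J_p(U − V)·V ≥ |ω₁·U − ω₂·V|^p. -/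
open Real

private lemma jensen_key (p a b s t : ℝ) (hp : 1 < p) (ha : 0 ≤ a) (hb : 0 ≤ b)
    (hs : 0 ≤ s) (ht : 0 ≤ t) :
    (s * a + t * b) ^ p ≤ (a + b) ^ (p - 1) * (s ^ p * a + t ^ p * b) := by
  rcases eq_or_lt_of_le (by positivity : (0:ℝ) ≤ a + b) with hc | hc
  · have ha0 : a = 0 := by linarith
    have hb0 : b = 0 := by linarith
    simp [ha0, hb0, Real.zero_rpow (by positivity : p ≠ 0)]
  · set c := a + b with hc_def
    have hJ := (convexOn_rpow hp.le).2 (Set.mem_Ici.2 hs) (Set.mem_Ici.2 ht)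
      (by positivity : (0:ℝ) ≤ a / c) (by positivity : (0:ℝ) ≤ b / c)
      (by field_simp; exact hc_def.symm)
    simp only [smul_eq_mul] at hJ
    have h1 : s * a + t * b = c * (a / c * s + b / c * t) := by
      field_simp
    have hcp : c ^ p = c ^ (p - 1) * c := by
      rw [← Real.rpow_add_one hc.ne']; norm_num
    rw [h1, Real.mul_rpow hc.le (by positivity), hcp]
    calc c ^ (p-1) * c * (a / c * s + b / c * t) ^ p
        ≤ c ^ (p-1) * c * (a / c * s ^ p + b / c * t ^ p) :=
          mul_le_mul_of_nonneg_left hJ (by positivity)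
      _ = c ^ (p-1) * (s ^ p * a + t ^ p * b) := by field_simp

private lemma omega_factor (p ω X : ℝ) (hp : p ≠ 0) (hX : X ≠ 0) :
    |ω * X| ^ (p - 2) * (ω * X) * ω = |ω| ^ p * (|X| ^ (p - 2) * X) := by
  rcases eq_or_ne ω 0 with h | h
  · simp [h, Real.zero_rpow hp]
  · rw [abs_mul, Real.mul_rpow (abs_nonneg _) (abs_nonneg _)]
    have h2 : |ω| ^ (p - 2) * ω * ω = |ω| ^ p := by
      have : ω * ω = |ω| ^ (2:ℝ) := by
        rw [Real.rpow_two, sq_abs, sq]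
      rw [mul_assoc, this, ← Real.rpow_add (abs_pos.2 h)]
      norm_num
    calc |ω| ^ (p-2) * |X| ^ (p-2) * (ω * X) * ω
        = (|ω| ^ (p-2) * ω * ω) * (|X| ^ (p-2) * X) := by ring
      _ = |ω| ^ p * (|X| ^ (p-2) * X) := by rw [h2]

/-- For `U·V ≤ 0` and `(ω₁, ω₂) ∈ 𝕊¹`:
`|ω₁U - ω₁V|^{p-2}(ω₁U - ω₁V)·ω₁U - |ω₂U - ω₂V|^{p-2}(ω₂U - ω₂V)·ω₂V ≥ |ω₁U - ω₂V|^p`. -/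
theorem stmt_13 (p : ℝ) (hp : 1 < p) (U V ω₁ ω₂ : ℝ) (hUV : U * V ≤ 0)
    (hω : ω₁ ^ 2 + ω₂ ^ 2 = 1) :
    |ω₁ * U - ω₂ * V| ^ p
      ≤ |ω₁ * U - ω₁ * V| ^ (p - 2) * (ω₁ * U - ω₁ * V) * ω₁ * U
        - |ω₂ * U - ω₂ * V| ^ (p - 2) * (ω₂ * U - ω₂ * V) * ω₂ * V := by
  rcases eq_or_ne (U - V) 0 with hX | hX
  · -- then U = V, and U*V ≤ 0 forces U = V = 0
    have hU : U = 0 := by nlinarith [sq_nonneg U]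
    have hV : V = 0 := by nlinarith [sq_nonneg V]
    simp [hU, hV, Real.zero_rpow (by positivity : p ≠ 0)]
  have habs : |U - V| = |U| + |V| := by
    rcases abs_cases U with ⟨h1, h2⟩ | ⟨h1, h2⟩ <;>
      rcases abs_cases V with ⟨h3, h4⟩ | ⟨h3, h4⟩ <;>
      rcases abs_cases (U - V) with ⟨h5, h6⟩ | ⟨h5, h6⟩ <;> nlinarith
  have hUU : (U - V) * U = |U - V| * |U| := by
    rcases abs_cases U with ⟨h1, h2⟩ | ⟨h1, h2⟩ <;>
      rcases abs_cases (U - V) with ⟨h5, h6⟩ | ⟨h5, h6⟩ <;> nlinarith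
  have hVV : (U - V) * (-V) = |U - V| * |V| := by
    rcases abs_cases V with ⟨h1, h2⟩ | ⟨h1, h2⟩ <;>
      rcases abs_cases (U - V) with ⟨h5, h6⟩ | ⟨h5, h6⟩ <;> nlinarith
  have hpos : 0 < |U - V| := abs_pos.2 hX
  have hpm1 : |U - V| ^ (p - 2) * |U - V| = |U - V| ^ (p - 1) := by
    rw [← Real.rpow_add_one hpos.ne']; ring_nf
  have hterm1 : |ω₁ * U - ω₁ * V| ^ (p - 2) * (ω₁ * U - ω₁ * V) * ω₁ * U
      = |ω₁| ^ p * (|U - V| ^ (p - 1) * |U|) := by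
    have := omega_factor p ω₁ (U - V) (by positivity) hX
    rw [show ω₁ * U - ω₁ * V = ω₁ * (U - V) by ring]
    calc |ω₁ * (U - V)| ^ (p-2) * (ω₁ * (U - V)) * ω₁ * U
        = (|ω₁ * (U - V)| ^ (p-2) * (ω₁ * (U - V)) * ω₁) * U := by ring
      _ = |ω₁| ^ p * (|U - V| ^ (p-2) * ((U - V) * U)) := by rw [this]; ring
      _ = |ω₁| ^ p * (|U - V| ^ (p-1) * |U|) := by
          rw [hUU, ← hpm1]; ring
  have hterm2 : -(|ω₂ * U - ω₂ * V| ^ (p - 2) * (ω₂ * U - ω₂ * V) * ω₂ * V)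
      = |ω₂| ^ p * (|U - V| ^ (p - 1) * |V|) := by
    have := omega_factor p ω₂ (U - V) (by positivity) hX
    rw [show ω₂ * U - ω₂ * V = ω₂ * (U - V) by ring]
    calc -(|ω₂ * (U - V)| ^ (p-2) * (ω₂ * (U - V)) * ω₂ * V)
        = (|ω₂ * (U - V)| ^ (p-2) * (ω₂ * (U - V)) * ω₂) * (-V) := by ring
      _ = |ω₂| ^ p * (|U - V| ^ (p-2) * ((U - V) * (-V))) := by rw [this]; ring
      _ = |ω₂| ^ p * (|U - V| ^ (p-1) * |V|) := by
          rw [hVV, ← hpm1]; ring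
  have hLHS : |ω₁ * U - ω₂ * V| ^ p ≤ (|ω₁| * |U| + |ω₂| * |V|) ^ p := by
    apply Real.rpow_le_rpow (abs_nonneg _) _ (by positivity)
    calc |ω₁ * U - ω₂ * V| ≤ |ω₁ * U| + |ω₂ * V| := abs_sub _ _
      _ = |ω₁| * |U| + |ω₂| * |V| := by rw [abs_mul, abs_mul]
  have hkey := jensen_key p |U| |V| |ω₁| |ω₂| hp (abs_nonneg _) (abs_nonneg _)
    (abs_nonneg _) (abs_nonneg _)
  calc |ω₁ * U - ω₂ * V| ^ p
      ≤ (|ω₁| * |U| + |ω₂| * |V|) ^ p := hLHS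
    _ ≤ (|U| + |V|) ^ (p - 1) * (|ω₁| ^ p * |U| + |ω₂| ^ p * |V|) := hkey
    _ = |ω₁| ^ p * (|U - V| ^ (p - 1) * |U|) + |ω₂| ^ p * (|U - V| ^ (p - 1) * |V|) := by
        rw [habs]; ring
    _ = _ := by rw [← hterm1, ← hterm2]; ring
end
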